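/- arXiv:math/9608201 — 2 statements merged into one kernel-verified Lean document; each statement's English description precedes it below -/
import Mathlib

section
/- (Lemma 1, w-derivatives, case 0<a≤1.) Let 0<a≤1, σ>-1, and let c_0,…,c_{n+1} be arbitrary complex constants. Define K(ξ,ξ') = Σ_{k=0}^{n+1} c_k (1-⟨z,z'⟩)^{ak-n-1} / ((1-⟨z,z'⟩)^a - ⟨w,w'⟩)^{σ+m+k} for ξ=(z,w), ξ'=(z',w') ∈ Ω_a. Then there is a constant C (depending on a, n, m, σ and the c_k) such that for all ξ, ξ' ∈ Ω_a and all 1≤j≤m, |∂K/∂w_j(ξ,ξ')| ≤ C |G_σ(ξ,ξ')|², where the derivative is taken in the first variable. -/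
noncomputable section

/-- The egg domain `Ω_a = {(z,w) ∈ ℂ^n × ℂ^m : |z|² + |w|^{2/a} < 1}`. -/
def eggP (a : ℝ) (n m : ℕ) : Set ((Fin n → ℂ) × (Fin m → ℂ)) :=
  {ζ | (∑ j, ‖ζ.1 j‖ ^ 2) + (∑ j, ‖ζ.2 j‖ ^ 2) ^ (1 / a) < 1}

/-- The Hermitian inner product `⟨z,z'⟩ = Σ_j z_j conj(z'_j)`. -/
def herm {n : ℕ} (z z' : Fin n → ℂ) : ℂ :=
  ∑ j, z j * (starRingEnd ℂ) (z' j)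

/-- The kernel
`K(ξ,ξ') = Σ_{k=0}^{n+1} c_k (1-⟨z,z'⟩)^{ak-n-1} / ((1-⟨z,z'⟩)^a - ⟨w,w'⟩)^{σ+m+k}`
(principal-branch complex powers). -/
def Kker (a σ : ℝ) (n m : ℕ) (c : Fin (n + 2) → ℂ)
    (ξ ξ' : (Fin n → ℂ) × (Fin m → ℂ)) : ℂ :=
  ∑ k : Fin (n + 2),
    c k * (1 - herm ξ.1 ξ'.1) ^ ((a * k - n - 1 : ℝ) : ℂ) /
      ((1 - herm ξ.1 ξ'.1) ^ (a : ℂ) - herm ξ.2 ξ'.2) ^ ((σ + m + k : ℝ) : ℂ)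

/-- The kernel `G_σ(ξ,ξ') = (1-⟨z,z'⟩)^{(a-1)(n+2)/2} / ((1-⟨z,z'⟩)^a - ⟨w,w'⟩)^{(σ+m+n+2)/2}`
(case `0 < a ≤ 1`, principal-branch complex powers). -/
def Gker (a σ : ℝ) (n m : ℕ) (ξ ξ' : (Fin n → ℂ) × (Fin m → ℂ)) : ℂ :=
  (1 - herm ξ.1 ξ'.1) ^ (((a - 1) * (n + 2) / 2 : ℝ) : ℂ) /
    ((1 - herm ξ.1 ξ'.1) ^ (a : ℂ) - herm ξ.2 ξ'.2) ^ (((σ + m + n + 2) / 2 : ℝ) : ℂ)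

/-! Along `(0, e_j)` only `⟨w,w'⟩` moves, so with `A = 1 - ⟨z,z'⟩` and `B = A^a - ⟨w,w'⟩` the
derivative is the termwise sum `Σ c_k (σ+m+k) conj(w'_j) A^{ak-n-1} B^{-(σ+m+k)-1}`.
On `Ω_a`, Cauchy–Schwarz and `(1-|z|²)(1-|z'|²) ≤ (1-|z||z'|)²` give `|⟨w,w'⟩| < |A|^a`; since
`Re A^a > 0` this puts `B` in the slit plane, and also `|A| ≤ 2`, `|B| ≤ 2|A|^a`. As
`|G_σ|² = |A|^{(a-1)(n+2)} / |B|^{σ+m+n+2}` and `|w'_j| ≤ 1`, the `k`-th term is at most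
`|c_k (σ+m+k)| |G_σ|²` times `|A|^{1-a} (|B|/|A|^a)^{n+1-k} ≤ 2^{n+2-k}`, where `a ≤ 1` and
`k ≤ n+1` enter. -/

open Complex ComplexConjugate

def oneSubHerm {n m : ℕ} (ξ ξ' : (Fin n → ℂ) × (Fin m → ℂ)) : ℂ :=
  1 - herm ξ.1 ξ'.1

def eggDenom {n m : ℕ} (a : ℝ) (ξ ξ' : (Fin n → ℂ) × (Fin m → ℂ)) : ℂ :=
  oneSubHerm ξ ξ' ^ (a : ℂ) - herm ξ.2 ξ'.2

lemma herm_eq_inner {n : ℕ} (z z' : Fin n → ℂ) :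
    herm z z' = inner ℂ (WithLp.toLp 2 z') (WithLp.toLp 2 z) := by
  simp [herm, PiLp.inner_apply]

lemma norm_herm_le {n : ℕ} (z z' : Fin n → ℂ) :
    ‖herm z z'‖ ≤ ‖WithLp.toLp 2 z‖ * ‖WithLp.toLp 2 z'‖ := by
  rw [herm_eq_inner, mul_comm]
  exact norm_inner_le_norm _ _

lemma herm_add_smul_single {m : ℕ} (w w' : Fin m → ℂ) (j : Fin m) (t : ℂ) :
    herm (w + t • Pi.single j 1) w' = herm w w' + t * conj (w' j) := by
  simp [herm, add_mul, Finset.sum_add_distrib, Pi.single_apply]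

lemma mul_lt_one_sub_mul_rpow {a x x' y y' : ℝ} (ha : 0 < a) (hx : 0 ≤ x) (hx' : 0 ≤ x')
    (hx1 : x ≤ 1) (hx1' : x' ≤ 1) (hy : 0 ≤ y) (hy' : 0 ≤ y')
    (h : y ^ 2 < (1 - x ^ 2) ^ a) (h' : y' ^ 2 < (1 - x' ^ 2) ^ a) :
    y * y' < (1 - x * x') ^ a := by
  have h1x : 0 ≤ 1 - x ^ 2 := by nlinarith
  have h1x' : 0 ≤ 1 - x' ^ 2 := by nlinarith
  have hxx' : 0 ≤ 1 - x * x' := by nlinarith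
  have hAM : (1 - x ^ 2) * (1 - x' ^ 2) ≤ (1 - x * x') ^ 2 := by nlinarith [sq_nonneg (x - x')]
  refine (pow_lt_pow_iff_left₀ (by positivity) (by positivity) two_ne_zero).mp ?_
  calc (y * y') ^ 2 = y ^ 2 * y' ^ 2 := mul_pow _ _ _
    _ < (1 - x ^ 2) ^ a * (1 - x' ^ 2) ^ a := mul_lt_mul'' h h' (by positivity) (by positivity)
    _ = ((1 - x ^ 2) * (1 - x' ^ 2)) ^ a := (Real.mul_rpow h1x h1x').symm
    _ ≤ ((1 - x * x') ^ 2) ^ a := by gcongr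
    _ = ((1 - x * x') ^ a) ^ 2 := by
      rw [← Real.rpow_natCast, ← Real.rpow_natCast, ← Real.rpow_mul hxx', ← Real.rpow_mul hxx',
        mul_comm a]

section Domain

variable {a : ℝ} {n m : ℕ} {ξ ξ' : (Fin n → ℂ) × (Fin m → ℂ)}

lemma mem_eggP_iff :
    ξ ∈ eggP a n m ↔ ‖WithLp.toLp 2 ξ.1‖ ^ 2 + (‖WithLp.toLp 2 ξ.2‖ ^ 2) ^ (1 / a) < 1 := by
  simp only [eggP, Set.mem_ofPred_eq, EuclideanSpace.norm_sq_eq]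

lemma norm_fst_lt_one_of_mem_eggP (h : ξ ∈ eggP a n m) : ‖WithLp.toLp 2 ξ.1‖ < 1 := by
  rw [mem_eggP_iff] at h
  have : (0 : ℝ) ≤ (‖WithLp.toLp 2 ξ.2‖ ^ 2) ^ (1 / a) := by positivity
  nlinarith [norm_nonneg (WithLp.toLp 2 ξ.1)]

lemma sq_norm_snd_lt_of_mem_eggP (ha : 0 < a) (h : ξ ∈ eggP a n m) :
    ‖WithLp.toLp 2 ξ.2‖ ^ 2 < (1 - ‖WithLp.toLp 2 ξ.1‖ ^ 2) ^ a := by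
  rw [mem_eggP_iff] at h
  have hw : (0 : ℝ) ≤ ‖WithLp.toLp 2 ξ.2‖ ^ 2 := by positivity
  have := Real.rpow_lt_rpow (by positivity) (lt_sub_iff_add_lt'.mpr h) ha
  rwa [← Real.rpow_mul hw, one_div_mul_cancel ha.ne', Real.rpow_one] at this

lemma norm_snd_apply_le_one_of_mem_eggP (ha : 0 < a) (h : ξ ∈ eggP a n m) (j : Fin m) :
    ‖ξ.2 j‖ ≤ 1 := by
  have hz := norm_fst_lt_one_of_mem_eggP h
  have hw : ‖WithLp.toLp 2 ξ.2‖ ^ 2 < 1 := (sq_norm_snd_lt_of_mem_eggP ha h).trans_le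
    (Real.rpow_le_one (sub_nonneg.mpr (pow_le_one₀ (norm_nonneg _) hz.le))
      (sub_le_self _ (sq_nonneg _)) ha.le)
  exact (PiLp.norm_apply_le _ j).trans ((sq_lt_one_iff₀ (norm_nonneg _)).mp hw).le

lemma norm_herm_fst_lt_one (hξ : ξ ∈ eggP a n m) (hξ' : ξ' ∈ eggP a n m) :
    ‖herm ξ.1 ξ'.1‖ < 1 :=
  (norm_herm_le _ _).trans_lt (mul_lt_one_of_nonneg_of_lt_one_left (norm_nonneg _)
    (norm_fst_lt_one_of_mem_eggP hξ) (norm_fst_lt_one_of_mem_eggP hξ').le)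

lemma re_oneSubHerm_pos (hξ : ξ ∈ eggP a n m) (hξ' : ξ' ∈ eggP a n m) :
    0 < (oneSubHerm ξ ξ').re := by
  have := (re_le_norm (herm ξ.1 ξ'.1)).trans_lt (norm_herm_fst_lt_one hξ hξ')
  simp only [oneSubHerm, sub_re, one_re]
  linarith

lemma norm_oneSubHerm_le_two (hξ : ξ ∈ eggP a n m) (hξ' : ξ' ∈ eggP a n m) :
    ‖oneSubHerm ξ ξ'‖ ≤ 2 := by
  have := norm_herm_fst_lt_one hξ hξ'
  have := norm_sub_le (1 : ℂ) (herm ξ.1 ξ'.1)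
  rw [norm_one] at this
  unfold oneSubHerm
  linarith

lemma norm_herm_snd_lt (ha : 0 < a) (hξ : ξ ∈ eggP a n m) (hξ' : ξ' ∈ eggP a n m) :
    ‖herm ξ.2 ξ'.2‖ < ‖oneSubHerm ξ ξ'‖ ^ a := by
  have hx := norm_fst_lt_one_of_mem_eggP hξ
  have hx' := norm_fst_lt_one_of_mem_eggP hξ'
  have hyy' := mul_lt_one_sub_mul_rpow ha (norm_nonneg _) (norm_nonneg _) hx.le hx'.le
    (norm_nonneg _) (norm_nonneg _) (sq_norm_snd_lt_of_mem_eggP ha hξ)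
    (sq_norm_snd_lt_of_mem_eggP ha hξ')
  have hu : 1 - ‖WithLp.toLp 2 ξ.1‖ * ‖WithLp.toLp 2 ξ'.1‖ ≤ ‖oneSubHerm ξ ξ'‖ := by
    have := norm_sub_norm_le (1 : ℂ) (herm ξ.1 ξ'.1)
    rw [norm_one] at this
    linarith [norm_herm_le ξ.1 ξ'.1, show ‖oneSubHerm ξ ξ'‖ = ‖1 - herm ξ.1 ξ'.1‖ from rfl]
  calc ‖herm ξ.2 ξ'.2‖ ≤ ‖WithLp.toLp 2 ξ.2‖ * ‖WithLp.toLp 2 ξ'.2‖ := norm_herm_le _ _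
    _ < (1 - ‖WithLp.toLp 2 ξ.1‖ * ‖WithLp.toLp 2 ξ'.1‖) ^ a := hyy'
    _ ≤ ‖oneSubHerm ξ ξ'‖ ^ a := by
      gcongr
      nlinarith [norm_nonneg (WithLp.toLp 2 ξ.1), norm_nonneg (WithLp.toLp 2 ξ'.1)]

end Domain

lemma Complex.re_cpow_ofReal_pos {x : ℂ} (hx : 0 < x.re) {a : ℝ} (ha0 : 0 ≤ a) (ha1 : a ≤ 1) :
    0 < (x ^ (a : ℂ)).re := by
  have hx0 : x ≠ 0 := fun h => by simp [h] at hx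
  have harg := abs_arg_lt_pi_div_two_iff.mpr (Or.inl hx)
  have : |x.arg * a| < Real.pi / 2 := by
    rw [abs_mul, abs_of_nonneg ha0]
    nlinarith [abs_nonneg x.arg]
  rw [cpow_ofReal_re]
  exact mul_pos (Real.rpow_pos_of_pos (norm_pos_iff.mpr hx0) a)
    (Real.cos_pos_of_mem_Ioo (abs_lt.mp this))

lemma Complex.sub_mem_slitPlane_of_norm_lt {x y : ℂ} (hx : 0 ≤ x.re) (h : ‖y‖ < ‖x‖) :
    x - y ∈ slitPlane := by
  rw [mem_slitPlane_iff]
  by_contra! hxy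
  obtain ⟨hre, him⟩ := hxy
  simp only [sub_re, sub_im, sub_eq_zero] at hre him
  have hsq : ‖y‖ ^ 2 < ‖x‖ ^ 2 := by gcongr
  rw [Complex.sq_norm, Complex.sq_norm, normSq_apply, normSq_apply, ← him] at hsq
  nlinarith

lemma hasDerivAt_sub_mul_cpow_neg {B q s : ℂ} (hB : B ∈ slitPlane) :
    HasDerivAt (fun t : ℂ => (B - t * q) ^ (-s)) (s * q * B ^ (-s - 1)) 0 := by
  have hline : HasDerivAt (fun t : ℂ => B - t * q) (-q) 0 := by
    simpa using ((hasDerivAt_id (0 : ℂ)).mul_const q).const_sub B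
  convert hline.cpow_const (c := -s) (by simpa using hB) using 1
  simp
  ring

section Kernel

variable {a σ : ℝ} {n m : ℕ} {c : Fin (n + 2) → ℂ} {ξ ξ' : (Fin n → ℂ) × (Fin m → ℂ)}

lemma Kker_add_smul (j : Fin m) (t : ℂ) :
    Kker a σ n m c (ξ + t • (0, Pi.single j 1)) ξ' =
      ∑ k : Fin (n + 2), c k * oneSubHerm ξ ξ' ^ ((a * k - n - 1 : ℝ) : ℂ) *
        (eggDenom a ξ ξ' - t * conj (ξ'.2 j)) ^ (-((σ + m + k : ℝ) : ℂ)) := by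
  simp only [Kker, Prod.fst_add, Prod.snd_add, Prod.smul_fst, Prod.smul_snd, smul_zero, add_zero,
    herm_add_smul_single, cpow_neg, div_eq_mul_inv, eggDenom, oneSubHerm, sub_add_eq_sub_sub]

lemma differentiableAt_Kker (hA : oneSubHerm ξ ξ' ∈ slitPlane)
    (hB : eggDenom a ξ ξ' ∈ slitPlane) :
    DifferentiableAt ℂ (fun ζ => Kker a σ n m c ζ ξ') ξ := by
  unfold Kker eggDenom oneSubHerm herm at *
  fun_prop (disch := first | assumption | exact cpow_ne_zero_iff.mpr (Or.inl (slitPlane_ne_zero hB)))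

lemma fderiv_Kker_apply (hA : oneSubHerm ξ ξ' ∈ slitPlane) (hB : eggDenom a ξ ξ' ∈ slitPlane)
    (j : Fin m) :
    fderiv ℂ (fun ζ => Kker a σ n m c ζ ξ') ξ (0, Pi.single j 1) =
      ∑ k : Fin (n + 2), c k * oneSubHerm ξ ξ' ^ ((a * k - n - 1 : ℝ) : ℂ) *
        (((σ + m + k : ℝ) : ℂ) * conj (ξ'.2 j) * eggDenom a ξ ξ' ^ (-((σ + m + k : ℝ) : ℂ) - 1)) := by
  rw [← (differentiableAt_Kker hA hB).lineDeriv_eq_fderiv]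
  apply HasLineDerivAt.lineDeriv
  simp only [HasLineDerivAt, Kker_add_smul]
  exact HasDerivAt.fun_sum fun k _ => (hasDerivAt_sub_mul_cpow_neg hB).const_mul _

lemma sq_norm_Gker :
    ‖Gker a σ n m ξ ξ'‖ ^ 2 =
      ‖oneSubHerm ξ ξ'‖ ^ ((a - 1) * (n + 2)) / ‖eggDenom a ξ ξ'‖ ^ (σ + m + n + 2) := by
  simp only [Gker, eggDenom, oneSubHerm, norm_div, norm_cpow_real, div_pow,
    ← Real.rpow_mul_natCast (norm_nonneg _), Nat.cast_ofNat, div_mul_cancel₀ _ (two_ne_zero (α := ℝ))]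

end Kernel

lemma rpow_mul_rpow_le_two_rpow {a r b d : ℝ} (ha0 : 0 ≤ a) (ha1 : a ≤ 1) (hr : 0 < r)
    (hr2 : r ≤ 2) (hb : 0 < b) (hb2 : b ≤ 2 * r ^ a) (hd : 0 ≤ d) :
    r ^ (1 - a - a * d) * b ^ d ≤ 2 ^ (d + 1) :=
  calc r ^ (1 - a - a * d) * b ^ d ≤ r ^ (1 - a - a * d) * (2 * r ^ a) ^ d := by gcongr
    _ = 2 ^ d * r ^ (1 - a) := by
      rw [Real.mul_rpow zero_le_two (by positivity), ← Real.rpow_mul hr.le, mul_left_comm,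
        ← Real.rpow_add hr]
      ring_nf
    _ ≤ 2 ^ d * 2 ^ (1 : ℝ) := by
      gcongr
      exact (Real.rpow_le_rpow hr.le hr2 (by linarith)).trans
        (Real.rpow_le_rpow_of_exponent_le one_le_two (by linarith))
    _ = 2 ^ (d + 1) := (Real.rpow_add two_pos d 1).symm

lemma rpow_mul_rpow_neg_le {a r b s k n : ℝ} (ha0 : 0 ≤ a) (ha1 : a ≤ 1) (hr : 0 < r)
    (hr2 : r ≤ 2) (hb : 0 < b) (hb2 : b ≤ 2 * r ^ a) (hk : k ≤ n + 1) :
    r ^ (a * k - n - 1) * b ^ (-(s + k) - 1) ≤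
      2 ^ (n + 2 - k) * (r ^ ((a - 1) * (n + 2)) / b ^ (s + n + 2)) := by
  have hsplit : r ^ (a * k - n - 1) * b ^ (-(s + k) - 1) =
      r ^ ((a - 1) * (n + 2)) / b ^ (s + n + 2) *
        (r ^ (1 - a - a * (n + 1 - k)) * b ^ (n + 1 - k)) := by
    rw [div_eq_mul_inv, ← Real.rpow_neg hb.le, mul_mul_mul_comm, ← Real.rpow_add hr,
      ← Real.rpow_add hb]
    congr 2 <;> ring
  rw [hsplit, mul_comm (2 ^ _)]
  gcongr
  refine (rpow_mul_rpow_le_two_rpow ha0 ha1 hr hr2 hb hb2 (sub_nonneg.mpr hk)).trans_eq ?_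
  ring_nf

lemma norm_Kker_wderiv_term_le {a s : ℝ} {n k : ℕ} {A B q c : ℂ} (ha0 : 0 ≤ a) (ha1 : a ≤ 1)
    (hk : k ≤ n + 1) (hA0 : A ≠ 0) (hA : ‖A‖ ≤ 2) (hB0 : B ≠ 0) (hB : ‖B‖ ≤ 2 * ‖A‖ ^ a)
    (hq : ‖q‖ ≤ 1) :
    ‖c * A ^ ((a * k - n - 1 : ℝ) : ℂ) * (((s + k : ℝ) : ℂ) * q * B ^ (-((s + k : ℝ) : ℂ) - 1))‖ ≤
      ‖c‖ * |s + k| * 2 ^ ((n : ℝ) + 2 - k) * (‖A‖ ^ ((a - 1) * (n + 2)) / ‖B‖ ^ (s + n + 2)) := by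
  have hexp : -((s + k : ℝ) : ℂ) - 1 = ((-(s + k) - 1 : ℝ) : ℂ) := by push_cast; ring
  rw [hexp, norm_mul, norm_mul, norm_mul, norm_mul, norm_cpow_real, norm_cpow_real,
    Complex.norm_real, Real.norm_eq_abs]
  calc ‖c‖ * ‖A‖ ^ (a * k - n - 1) * (|s + k| * ‖q‖ * ‖B‖ ^ (-(s + k) - 1))
      = ‖c‖ * |s + k| * ‖q‖ * (‖A‖ ^ (a * k - n - 1) * ‖B‖ ^ (-(s + k) - 1)) := by ring
    _ ≤ ‖c‖ * |s + k| * 1 *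
        (2 ^ ((n : ℝ) + 2 - k) * (‖A‖ ^ ((a - 1) * (n + 2)) / ‖B‖ ^ (s + n + 2))) := by
      gcongr ‖c‖ * |s + k| * ?_ * ?_
      exact rpow_mul_rpow_neg_le ha0 ha1 (norm_pos_iff.mpr hA0) hA (norm_pos_iff.mpr hB0) hB
        (by exact_mod_cast hk : (k : ℝ) ≤ n + 1)
    _ = _ := by ring

theorem kernel_wderiv_bound_general (n m : ℕ)
    (a σ : ℝ) (ha : 0 < a) (ha1 : a ≤ 1) (c : Fin (n + 2) → ℂ) :
    ∃ C : ℝ, ∀ ξ ∈ eggP a n m, ∀ ξ' ∈ eggP a n m, ∀ j : Fin m,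
      ‖fderiv ℂ (fun ζ : (Fin n → ℂ) × (Fin m → ℂ) => Kker a σ n m c ζ ξ') ξ
          (0, Pi.single j 1)‖ ≤ C * ‖Gker a σ n m ξ ξ'‖ ^ 2 := by
  refine ⟨∑ k : Fin (n + 2), ‖c k‖ * |σ + m + k| * 2 ^ ((n : ℝ) + 2 - k),
    fun ξ hξ ξ' hξ' j => ?_⟩
  have hAre := re_oneSubHerm_pos hξ hξ'
  have hA : oneSubHerm ξ ξ' ∈ slitPlane := mem_slitPlane_iff.mpr (Or.inl hAre)
  have hg := norm_herm_snd_lt ha hξ hξ'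
  rw [← norm_cpow_real] at hg
  have hB : eggDenom a ξ ξ' ∈ slitPlane :=
    sub_mem_slitPlane_of_norm_lt (re_cpow_ofReal_pos hAre ha.le ha1).le hg
  have hB2 : ‖eggDenom a ξ ξ'‖ ≤ 2 * ‖oneSubHerm ξ ξ'‖ ^ a := by
    rw [← norm_cpow_real, eggDenom]
    linarith [norm_sub_le (oneSubHerm ξ ξ' ^ (a : ℂ)) (herm ξ.2 ξ'.2)]
  rw [fderiv_Kker_apply hA hB, sq_norm_Gker, Finset.sum_mul]
  refine (norm_sum_le _ _).trans (Finset.sum_le_sum fun k _ => ?_)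
  exact norm_Kker_wderiv_term_le ha.le ha1 (Nat.lt_succ_iff.mp k.isLt)
    (slitPlane_ne_zero hA) (norm_oneSubHerm_le_two hξ hξ')
    (slitPlane_ne_zero hB) hB2 (by simpa using norm_snd_apply_le_one_of_mem_eggP ha hξ' j)

/-- Lemma 1 (w-derivatives, case `0 < a ≤ 1`):
`|∂K/∂w_j(ξ,ξ')| ≤ C |G_σ(ξ,ξ')|²` for `ξ, ξ' ∈ Ω_a`, `1 ≤ j ≤ m`. -/
theorem kernel_wderiv_bound (n m : ℕ) (hn : 1 ≤ n) (hm : 1 ≤ m)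
    (a σ : ℝ) (ha : 0 < a) (ha1 : a ≤ 1) (hσ : -1 < σ) (c : Fin (n + 2) → ℂ) :
    ∃ C : ℝ, ∀ ξ ∈ eggP a n m, ∀ ξ' ∈ eggP a n m, ∀ j : Fin m,
      ‖fderiv ℂ (fun ζ : (Fin n → ℂ) × (Fin m → ℂ) => Kker a σ n m c ζ ξ') ξ
          (0, Pi.single j 1)‖ ≤ C * ‖Gker a σ n m ξ ξ'‖ ^ 2 :=
  kernel_wderiv_bound_general n m a σ ha ha1 c
end
end

section
/- (Inequality (5).) Let 0<a≤1, let n,m ≥ 1 be integers, let σ>-1, 0<d<σ+1, and set μ = σ-d and b = (a(σ+m)+n+2)/2. Then there is a constant C such that for all integers j,l ≥ 0, Γ(j+la+b)² ≤ C (2(l+j)+1) Γ(a(μ+l+m)+j+n+1) Γ(j+a(l+d)). -/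
noncomputable section

lemma gamma_midpoint_sq_le (u v : ℝ) (hu : 0 < u) (hv : 0 < v) :
    Real.Gamma ((u + v) / 2) ^ 2 ≤ Real.Gamma u * Real.Gamma v := by
  have h := Real.convexOn_log_Gamma.2 (Set.mem_Ioi.2 hu) (Set.mem_Ioi.2 hv)
      (by norm_num : (0:ℝ) ≤ 1/2) (by norm_num : (0:ℝ) ≤ 1/2) (by norm_num)
  simp only [smul_eq_mul, Function.comp] at h
  have hmid : 0 < (u + v) / 2 := by linarith
  have h1 := Real.Gamma_pos_of_pos hu
  have h2 := Real.Gamma_pos_of_pos hv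
  have h3 := Real.Gamma_pos_of_pos hmid
  have hlog : Real.log (Real.Gamma ((u + v) / 2) ^ 2)
      ≤ Real.log (Real.Gamma u * Real.Gamma v) := by
    rw [Real.log_pow, Real.log_mul h1.ne' h2.ne']
    have heq : (u + v) / 2 = 1/2 * u + 1/2 * v := by ring
    rw [heq]
    push_cast
    linarith
  exact (Real.log_le_log_iff (by positivity) (by positivity)).1 hlog

/-- Inequality (5): with `μ = σ - d` and `b = (a(σ+m)+n+2)/2`, there is a constant `C`
such that for all integers `j, l ≥ 0`,
`Γ(j+la+b)² ≤ C (2(l+j)+1) Γ(a(μ+l+m)+j+n+1) Γ(j+a(l+d))`. -/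
theorem gamma_inequality_five (a : ℝ) (ha : 0 < a) (ha1 : a ≤ 1)
    (n m : ℕ) (hn : 1 ≤ n) (hm : 1 ≤ m)
    (σ d : ℝ) (hσ : -1 < σ) (hd0 : 0 < d) (hd1 : d < σ + 1) :
    ∃ C : ℝ, ∀ j l : ℕ,
      Real.Gamma ((j : ℝ) + (l : ℝ) * a + (a * (σ + m) + n + 2) / 2) ^ 2 ≤
        C * ((2 * ((l : ℝ) + j) + 1) *
          Real.Gamma (a * ((σ - d) + l + m) + j + n + 1) *
          Real.Gamma ((j : ℝ) + a * ((l : ℝ) + d))) := by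
  set b : ℝ := (a * (σ + m) + n + 2) / 2 with hbdef
  have hm1 : (1:ℝ) ≤ m := by exact_mod_cast hm
  have hn1 : (1:ℝ) ≤ n := by exact_mod_cast hn
  have hσm : 0 < σ + (m:ℝ) := by linarith
  have hb : 1 < b := by
    have := mul_pos ha hσm
    rw [hbdef]; linarith
  refine ⟨b + 1, fun j l => ?_⟩
  have hj : (0:ℝ) ≤ j := Nat.cast_nonneg j
  have hl : (0:ℝ) ≤ l := Nat.cast_nonneg l
  set A : ℝ := a * ((σ - d) + l + m) + j + n + 1 with hAdef
  set B : ℝ := (j : ℝ) + a * ((l : ℝ) + d) with hBdef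
  have hA : 0 < A := by
    have h1 : 0 < (σ - d) + (l:ℝ) + m := by linarith
    have := mul_pos ha h1
    rw [hAdef]; linarith
  have hB : 0 < B := by
    have h1 : 0 < (l:ℝ) + d := by linarith
    have := mul_pos ha h1
    rw [hBdef]; linarith
  set t : ℝ := (A + B) / 2 with htdef
  have ht : 0 < t := by rw [htdef]; linarith
  have harg : (j : ℝ) + (l : ℝ) * a + b = (t + (t + 1)) / 2 := by
    rw [htdef, hAdef, hBdef, hbdef]; ring
  -- Step 1: Γ(j+la+b)² ≤ Γ(t) Γ(t+1) = t Γ(t)²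
  have step1 : Real.Gamma ((j : ℝ) + (l : ℝ) * a + b) ^ 2
      ≤ t * Real.Gamma t ^ 2 := by
    have := gamma_midpoint_sq_le t (t + 1) ht (by linarith)
    rw [Real.Gamma_add_one ht.ne'] at this
    rw [harg]
    calc Real.Gamma ((t + (t + 1)) / 2) ^ 2 ≤ Real.Gamma t * (t * Real.Gamma t) := this
      _ = t * Real.Gamma t ^ 2 := by ring
  -- Step 2: Γ(t)² ≤ Γ(A) Γ(B)
  have step2 : Real.Gamma t ^ 2 ≤ Real.Gamma A * Real.Gamma B :=
    gamma_midpoint_sq_le A B hA hB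
  have hGA := Real.Gamma_pos_of_pos hA
  have hGB := Real.Gamma_pos_of_pos hB
  -- Step 3: t ≤ (b+1)(2(l+j)+1)
  have step3 : t ≤ (b + 1) * (2 * ((l:ℝ) + j) + 1) := by
    have ht' : t = (j:ℝ) + (l:ℝ) * a + b - 1/2 := by
      rw [htdef, hAdef, hBdef, hbdef]; ring
    have hla : (l:ℝ) * a ≤ l := by
      have := mul_le_mul_of_nonneg_left ha1 hl
      simpa using this
    nlinarith [mul_nonneg hl hj, mul_nonneg hl hl, mul_nonneg hj hj]
  calc Real.Gamma ((j : ℝ) + (l : ℝ) * a + b) ^ 2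
      ≤ t * Real.Gamma t ^ 2 := step1
    _ ≤ t * (Real.Gamma A * Real.Gamma B) := by
        exact mul_le_mul_of_nonneg_left step2 ht.le
    _ ≤ ((b + 1) * (2 * ((l:ℝ) + j) + 1)) * (Real.Gamma A * Real.Gamma B) := by
        exact mul_le_mul_of_nonneg_right step3 (by positivity)
    _ = (b + 1) * ((2 * ((l : ℝ) + j) + 1) * Real.Gamma A * Real.Gamma B) := by ring
end
end
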